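/- arXiv:0910.1280 — 2 statements merged into one kernel-verified Lean document; each statement's English description precedes it below -/
import Mathlib

section
/- Let G = A ⋊ S_n with A ⊆ (C₂)ⁿ, a ∈ A, τ ∈ S_n, and σ = (a, τ) ∈ G. The conjugacy classes O_a^G (of a) and O_σ^G (of σ) are square-commutative (i.e. (xy)² = (yx)² for all x ∈ O_a^G, y ∈ O_σ^G) if and only if a ∈ Z(G) or τ² = 1. -/
/-- The action of `S_n` on `(C₂)ⁿ` by permuting coordinates. -/
def permAct (n : ℕ) : Equiv.Perm (Fin n) →* MulAut (Fin n → Multiplicative (ZMod 2)) where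
  toFun h := MulEquiv.arrowCongr h (MulEquiv.refl (Multiplicative (ZMod 2)))
  map_one' := by ext a i; rfl
  map_mul' h₁ h₂ := by ext a i; rfl

/-!
For `c` in the abelian normal subgroup and `g = (b, π)`, expanding both squares shows that
`(c g)² = (g c)²` exactly when `π²` fixes `c`. Conjugates of `σ` have permutation part conjugate
to `τ`, so they all satisfy this when `τ² = 1`; a central `a` is fixed by every permutation.
Conversely, a non-central `a` is a non-constant vector, and if `τ²` moves a point `j`, a
coordinate permutation of `a` takes different values at `j` and `τ² j`, so it is not fixed by `τ²`.
-/

namespace SemidirectProduct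

variable {N G : Type*} [CommGroup N] [Group G] {φ : G →* MulAut N}

theorem sq_inl_mul_eq_sq_mul_inl_iff (c : N) (g : N ⋊[φ] G) :
    (inl c * g) ^ 2 = (g * inl c) ^ 2 ↔ φ (g.right ^ 2) c = c := by
  obtain ⟨b, π⟩ := g
  simp only [sq, SemidirectProduct.ext_iff, mul_left, mul_right, left_inl, right_inl, map_mul,
    map_one, MulAut.mul_apply, MulAut.one_apply, one_mul, mul_one, and_true]
  rw [show c * b * (φ π c * φ π b) = c * (b * φ π c * φ π b) by ac_rfl,
    show b * φ π c * (φ π b * φ π (φ π c)) = φ π (φ π c) * (b * φ π c * φ π b) by ac_rfl,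
    mul_left_inj, eq_comm]

theorem isConj_inl_iff {n : N} {x : N ⋊[φ] G} : IsConj (inl n) x ↔ ∃ g, inl (φ g n) = x := by
  rw [isConj_iff]
  constructor
  · rintro ⟨g, rfl⟩
    refine ⟨g.right, ?_⟩
    ext <;> simp [mul_left, mul_right, inv_left, mul_comm]
  · rintro ⟨g, rfl⟩
    exact ⟨inr g, by rw [inl_aut, map_inv]⟩

theorem inl_mem_center_iff {n : N} :
    inl n ∈ Subgroup.center (N ⋊[φ] G) ↔ ∀ g, φ g n = n := by
  rw [Subgroup.mem_center_iff]
  constructor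
  · intro h g
    simpa [mul_left] using congrArg left (h (inr g))
  · intro h g
    ext <;> simp [mul_left, mul_right, h, mul_comm]

end SemidirectProduct

theorem Equiv.Perm.exists_comp_ne_of_ne_one {α β : Type*} {f : α → β} {p q : α}
    (hpq : f p ≠ f q) {σ : Equiv.Perm α} (hσ : σ ≠ 1) : ∃ ρ : Equiv.Perm α, f ∘ ρ ∘ σ ≠ f ∘ ρ := by
  classical
  obtain ⟨j, hj⟩ : ∃ j, σ j ≠ j := by
    by_contra! h
    exact hσ (Equiv.ext h)
  obtain ⟨k, hk⟩ : ∃ k, f k ≠ f j := by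
    by_contra! h
    exact hpq ((h p).trans (h q).symm)
  by_cases hσj : f (σ j) = f j
  · refine ⟨Equiv.swap j k, Function.ne_iff.2 ⟨j, ?_⟩⟩
    by_cases hσk : σ j = k
    · simpa [hσk] using hk.symm
    · simpa [Equiv.swap_apply_of_ne_of_ne hj hσk, hσj] using hk.symm
  · exact ⟨1, Function.ne_iff.2 ⟨j, hσj⟩⟩

theorem permAct_apply {n : ℕ} (π : Equiv.Perm (Fin n)) (c : Fin n → Multiplicative (ZMod 2)) :
    permAct n π c = c ∘ ⇑π⁻¹ := rfl

theorem exists_permAct_permAct_ne {n : ℕ} {a : Fin n → Multiplicative (ZMod 2)}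
    (ha : ∃ π, permAct n π a ≠ a) {σ : Equiv.Perm (Fin n)} (hσ : σ ≠ 1) :
    ∃ ρ, permAct n σ (permAct n ρ a) ≠ permAct n ρ a := by
  obtain ⟨π, hπ⟩ := ha
  obtain ⟨p, hp⟩ := Function.ne_iff.1 hπ
  obtain ⟨ρ, hρ⟩ := Equiv.Perm.exists_comp_ne_of_ne_one (f := a) hp (inv_ne_one.2 hσ)
  exact ⟨ρ⁻¹, by simpa only [permAct_apply, inv_inv, Function.comp_assoc] using hρ⟩

/-- In `G = (C₂)ⁿ ⋊ S_n`, for `a ∈ A`, `τ ∈ S_n`, `σ = (a, τ)`, the conjugacy classes of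
`a` and of `σ` are square-commutative (`(xy)² = (yx)²` for all `x ∈ O_a`, `y ∈ O_σ`)
iff `a ∈ Z(G)` or `τ² = 1`. -/
theorem squareCommutative_iff (n : ℕ) (a : Fin n → Multiplicative (ZMod 2))
    (τ : Equiv.Perm (Fin n)) :
    (∀ x y : (Fin n → Multiplicative (ZMod 2)) ⋊[permAct n] Equiv.Perm (Fin n),
        IsConj (SemidirectProduct.inl a) x → IsConj ⟨a, τ⟩ y →
        (x * y) ^ 2 = (y * x) ^ 2) ↔
      (SemidirectProduct.inl a ∈
          Subgroup.center ((Fin n → Multiplicative (ZMod 2)) ⋊[permAct n] Equiv.Perm (Fin n)) ∨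
        τ ^ 2 = 1) := by
  rw [SemidirectProduct.inl_mem_center_iff]
  constructor
  · intro H
    by_contra! ⟨ha, hτ⟩
    obtain ⟨ρ, hρ⟩ := exists_permAct_permAct_ne ha hτ
    exact hρ <| (SemidirectProduct.sq_inl_mul_eq_sq_mul_inl_iff _ ⟨a, τ⟩).1 <|
      H _ _ (SemidirectProduct.isConj_inl_iff.2 ⟨ρ, rfl⟩) (.refl _)
  · rintro h x y hx hy
    obtain ⟨ρ, rfl⟩ := SemidirectProduct.isConj_inl_iff.1 hx
    rw [SemidirectProduct.sq_inl_mul_eq_sq_mul_inl_iff]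
    rcases h with ha | hτ
    · rw [ha, ha]
    · have hy2 : IsConj (τ ^ 2) (y.right ^ 2) := (SemidirectProduct.rightHom.map_isConj hy).pow 2
      rw [hτ, isConj_one_right] at hy2
      rw [hy2, map_one, MulAut.one_apply]
end

section
/- Let n = 2k with k ≥ 1 and consider S_n. The conjugacy class of transpositions and the conjugacy class of fixed-point-free involutions (cycle type 2^k) are square-commutative: for any transposition x and any product y of k disjoint transpositions, (xy)² = (yx)². -/
/-!
Since `y` is an involution, `(x * y) ^ 2 = x * (y * x * y⁻¹)` and
`(y * x) ^ 2 = (y * x * y⁻¹) * x`, and conjugating `x = swap i j` by `y` gives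
`swap (y i) (y j)`. So the claim is that `swap i j` commutes with `swap (y i) (y j)`. As `y` is a
fixed-point-free involution, the pairs `{i, j}` and `{y i, y j}` are either equal (when `y i = j`)
or disjoint, and in both cases the two transpositions commute.
-/

namespace Equiv.Perm

variable {α : Type*} [DecidableEq α]

theorem commute_swap_swap_of_ne {a b c d : α} (hac : a ≠ c) (had : a ≠ d) (hbc : b ≠ c)
    (hbd : b ≠ d) : Commute (swap a b) (swap c d) :=
  Disjoint.commute fun m => by grind [swap_apply_of_ne_of_ne]

theorem sq_swap_mul_of_sq_eq_one {y : Perm α} (hy : y ^ 2 = 1) (i j : α) :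
    (swap i j * y) ^ 2 = swap i j * swap (y i) (y j) := by
  rw [swap_apply_apply, inv_eq_of_mul_eq_one_right (by rwa [← sq]), sq]
  simp only [mul_assoc]

theorem sq_mul_swap_of_sq_eq_one {y : Perm α} (hy : y ^ 2 = 1) (i j : α) :
    (y * swap i j) ^ 2 = swap (y i) (y j) * swap i j := by
  rw [swap_apply_apply, inv_eq_of_mul_eq_one_right (by rwa [← sq]), sq]
  simp only [mul_assoc]

theorem commute_swap_swap_apply_of_sq_eq_one {y : Perm α} (hy : y ^ 2 = 1) (hyf : ∀ m, y m ≠ m)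
    (i j : α) : Commute (swap i j) (swap (y i) (y j)) := by
  have hyy (m : α) : y (y m) = m := by rw [← mul_apply, ← sq, hy, one_apply]
  by_cases hyi : y i = j
  · have hyj : y j = i := by rw [← hyi, hyy]
    rw [hyi, hyj, swap_comm]
  · have hyj : y j ≠ i := fun h => hyi (by rw [← h, hyy])
    exact commute_swap_swap_of_ne (hyf i).symm (Ne.symm hyj) (Ne.symm hyi) (hyf j).symm

end Equiv.Perm

theorem transposition_fpfInvolution_squareCommutative_general (k : ℕ)
    (x y : Equiv.Perm (Fin (2 * k))) (i j : Fin (2 * k))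
    (hx : x = Equiv.swap i j) (hy : y ^ 2 = 1) (hyf : ∀ m, y m ≠ m) :
    (x * y) ^ 2 = (y * x) ^ 2 := by
  subst hx
  rw [Equiv.Perm.sq_swap_mul_of_sq_eq_one hy, Equiv.Perm.sq_mul_swap_of_sq_eq_one hy]
  exact (Equiv.Perm.commute_swap_swap_apply_of_sq_eq_one hy hyf i j).eq

/-- In `S_{2k}`, the class of transpositions and the class of fixed-point-free involutions
(cycle type `2^k`) are square-commutative: if `x` is a transposition and `y` is an involution
without fixed points, then `(xy)² = (yx)²`. -/
theorem transposition_fpfInvolution_squareCommutative (k : ℕ) (hk : 1 ≤ k)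
    (x y : Equiv.Perm (Fin (2 * k))) (i j : Fin (2 * k)) (hij : i ≠ j)
    (hx : x = Equiv.swap i j) (hy : y ^ 2 = 1) (hyf : ∀ m, y m ≠ m) :
    (x * y) ^ 2 = (y * x) ^ 2 :=
  transposition_fpfInvolution_squareCommutative_general k x y i j hx hy hyf
end
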